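/- Let n ≥ 3 and let W be a weight with w_{i,j} > 0 for all 1 ≤ i < j ≤ n. For any three pairwise distinct permutations π, ψ, φ ∈ S_n, the equality d_{G_n}(π,φ) = d_{G_n}(π,ψ) + d_{G_n}(ψ,φ) holds if and only if d_W(π,φ) = d_W(π,ψ) + d_W(ψ,φ); that is, ψ lies metrically between π and φ with respect to the graph metric d_{G_n} if and only if it does so with respect to d_W. -/

import Mathlib

open Finset

/-- The set of index pairs `(i,j)` with `i < j`. -/
def pairs (n : ℕ) : Finset (Fin n × Fin n) :=
  Finset.univ.filter (fun p => p.1 < p.2)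

/-- The discordance set of two permutations: all pairs `i < j` with
`(π_j - π_i)(φ_j - φ_i) < 0`. -/
def dsc (n : ℕ) (π φ : Equiv.Perm (Fin n)) : Finset (Fin n × Fin n) :=
  (pairs n).filter (fun p =>
    ((π p.2 : ℤ) - (π p.1 : ℤ)) * ((φ p.2 : ℤ) - (φ p.1 : ℤ)) < 0)

/-- `W` is a weight: a strictly upper triangular matrix of nonnegative reals
with positive total sum. -/
def IsWeight (n : ℕ) (W : Fin n → Fin n → ℝ) : Prop :=
  (∀ i j : Fin n, ¬ i < j → W i j = 0) ∧ (∀ i j : Fin n, 0 ≤ W i j) ∧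
    0 < ∑ p ∈ pairs n, W p.1 p.2

/-- The weighted Kendall tau distance. -/
noncomputable def dW (n : ℕ) (W : Fin n → Fin n → ℝ) (π φ : Equiv.Perm (Fin n)) : ℝ :=
  (∑ p ∈ dsc n π φ, W p.1 p.2) / (∑ p ∈ pairs n, W p.1 p.2)
lemma dsc_comm (n : ℕ) (π φ : Equiv.Perm (Fin n)) : dsc n π φ = dsc n φ π := by
  ext p
  simp only [dsc, Finset.mem_filter]
  rw [mul_comm]

/-- The edge graph of the permutohedron of order `n`: two permutations are
adjacent iff their discordance set is a singleton. -/
def Gn (n : ℕ) : SimpleGraph (Equiv.Perm (Fin n)) where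
  Adj π φ := (dsc n π φ).card = 1
  symm := by
    constructor
    intro π φ h
    rwa [dsc_comm]
  loopless := by
    constructor
    intro π h
    have he : dsc n π π = ∅ := by
      ext p
      simp only [dsc, Finset.mem_filter, Finset.notMem_empty, iff_false, not_and]
      intro _
      exact not_lt.mpr (mul_self_nonneg _)
    rw [he] at h
    simp at h

/-! The discordance sets compose by symmetric difference:
`dsc π φ = dsc π ψ ∆ dsc ψ φ`. Hence every edge of `G_n` changes the discordance set by one
pair, while for `π ≠ φ` some two consecutive values of `π` sit in a discordant pair, and
swapping them is an edge towards `φ`; so `d_{G_n}(π, φ) = |dsc π φ|`. Both betweenness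
conditions then say that `dsc π ψ` and `dsc ψ φ` are disjoint, for `d_W` because every pair
has positive weight. -/

open Equiv

lemma mem_dsc_iff {n : ℕ} {π φ : Perm (Fin n)} {p : Fin n × Fin n} :
    p ∈ dsc n π φ ↔ p.1 < p.2 ∧ ¬(π p.1 < π p.2 ↔ φ p.1 < φ p.2) := by
  simp only [dsc, pairs, mem_filter, mem_univ, true_and, and_congr_right_iff]
  intro hp
  have hπ : π p.1 ≠ π p.2 := π.injective.ne hp.ne
  have hφ : φ p.1 ≠ φ p.2 := φ.injective.ne hp.ne
  rw [Ne, Fin.ext_iff] at hπ hφ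
  rw [Fin.lt_def, Fin.lt_def, mul_neg_iff]
  omega

lemma dsc_eq_symmDiff (n : ℕ) (π ψ φ : Perm (Fin n)) :
    dsc n π φ = symmDiff (dsc n π ψ) (dsc n ψ φ) := by
  ext p
  simp only [mem_symmDiff, mem_dsc_iff]
  tauto

lemma dsc_self (n : ℕ) (π : Perm (Fin n)) : dsc n π π = ∅ := by
  ext p
  simp [mem_dsc_iff]

lemma swap_lt_swap_iff_of_val_eq_succ {n : ℕ} {a b x y : Fin n} (hab : (b : ℕ) = a + 1) :
    (swap a b x < swap a b y ↔ x < y) ↔ ¬((x = a ∧ y = b) ∨ (x = b ∧ y = a)) := by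
  simp only [swap_apply_def, Fin.lt_def, Fin.ext_iff]
  split_ifs <;> omega

lemma mem_dsc_swap_mul_iff {n : ℕ} {π : Perm (Fin n)} {a b : Fin n} (hab : (b : ℕ) = a + 1)
    {p : Fin n × Fin n} :
    p ∈ dsc n π (swap a b * π) ↔
      p.1 < p.2 ∧ ((π p.1 = a ∧ π p.2 = b) ∨ (π p.1 = b ∧ π p.2 = a)) := by
  rw [mem_dsc_iff, Perm.mul_apply, Perm.mul_apply, Iff.comm (a := π p.1 < π p.2),
    swap_lt_swap_iff_of_val_eq_succ hab, not_not]

lemma card_dsc_swap_mul {n : ℕ} (π : Perm (Fin n)) {a b : Fin n} (hab : (b : ℕ) = a + 1) :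
    (dsc n π (swap a b * π)).card = 1 := by
  have hab' : π.symm a ≠ π.symm b := π.symm.injective.ne (Fin.ne_of_val_ne (by omega))
  rw [card_eq_one]
  rcases hab'.lt_or_gt with h | h
  · refine ⟨(π.symm a, π.symm b), ?_⟩
    ext ⟨i, j⟩
    simp only [mem_dsc_swap_mul_iff hab, mem_singleton, Prod.mk.injEq, ← Equiv.eq_symm_apply]
    grind
  · refine ⟨(π.symm b, π.symm a), ?_⟩
    ext ⟨i, j⟩
    simp only [mem_dsc_swap_mul_iff hab, mem_singleton, Prod.mk.injEq, ← Equiv.eq_symm_apply]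
    grind

lemma exists_consecutive_inversion_of_ne {n : ℕ} {π φ : Perm (Fin n)} (h : π ≠ φ) :
    ∃ a b : Fin n, (b : ℕ) = a + 1 ∧ φ (π.symm b) < φ (π.symm a) := by
  -- otherwise `φ ∘ π⁻¹` is strictly monotone, hence the identity
  by_contra! hmono
  apply h
  cases n with
  | zero => exact Subsingleton.elim _ _
  | succ n =>
    have hσ : StrictMono (φ ∘ π.symm) := Fin.strictMono_iff_lt_succ.2 fun i =>
      (hmono i.castSucc i.succ (by simp)).lt_of_ne
        ((φ.injective.comp π.symm.injective).ne Fin.castSucc_lt_succ.ne)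
    have hid : φ ∘ π.symm = id :=
      (hσ.range_inj strictMono_id).1 (by simp [Set.range_comp, Set.range_id])
    exact Equiv.ext fun x => by simpa using (congrFun hid (π x)).symm

lemma exists_adj_dsc_subset {n : ℕ} {π φ : Perm (Fin n)} (h : π ≠ φ) :
    ∃ π', (Gn n).Adj π π' ∧ dsc n π π' ⊆ dsc n π φ := by
  obtain ⟨a, b, hab, hφ⟩ := exists_consecutive_inversion_of_ne h
  refine ⟨swap a b * π, card_dsc_swap_mul π hab, fun ⟨i, j⟩ hp => ?_⟩
  have hlt : a < b := Fin.lt_def.2 (by omega)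
  rw [mem_dsc_swap_mul_iff hab] at hp
  rw [mem_dsc_iff]
  obtain ⟨hij, ⟨ha, hb⟩ | ⟨hb, ha⟩⟩ := hp <;>
  · dsimp only at ha hb hij ⊢
    rw [← Equiv.eq_symm_apply] at ha hb
    subst ha hb
    simp only [Equiv.apply_symm_apply]
    exact ⟨hij, by grind⟩

lemma card_dsc_add_card_dsc_of_subset {n : ℕ} {π ψ φ : Perm (Fin n)}
    (h : dsc n π ψ ⊆ dsc n π φ) :
    (dsc n ψ φ).card + (dsc n π ψ).card = (dsc n π φ).card := by
  rw [dsc_eq_symmDiff n ψ π φ, dsc_comm n ψ π, symmDiff_of_le h, card_sdiff_add_card_eq_card h]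

lemma exists_walk_length_eq_card_dsc {n : ℕ} (π φ : Perm (Fin n)) :
    ∃ w : (Gn n).Walk π φ, w.length = (dsc n π φ).card := by
  induction hm : (dsc n π φ).card generalizing π with
  | zero =>
    obtain rfl : π = φ := by
      by_contra h
      obtain ⟨π', hadj, hsub⟩ := exists_adj_dsc_subset h
      have h1 : (dsc n π π').card = 1 := hadj
      have := card_le_card hsub
      omega
    exact ⟨.nil, rfl⟩
  | succ m ih =>
    have h : π ≠ φ := by rintro rfl; simp [dsc_self] at hm
    obtain ⟨π', hadj, hsub⟩ := exists_adj_dsc_subset h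
    have hcard := card_dsc_add_card_dsc_of_subset hsub
    obtain ⟨w, hw⟩ := ih π' (by rw [hadj] at hcard; omega)
    exact ⟨.cons hadj w, by simp [hw]⟩

lemma card_dsc_le_length {n : ℕ} {π φ : Perm (Fin n)} (w : (Gn n).Walk π φ) :
    (dsc n π φ).card ≤ w.length := by
  induction w with
  | nil => simp [dsc_self]
  | @cons π ψ φ hadj w ih =>
    have h1 : (dsc n π ψ).card = 1 := hadj
    calc (dsc n π φ).card ≤ (dsc n π ψ ∪ dsc n ψ φ).card := by
          rw [dsc_eq_symmDiff n π ψ φ]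
          exact card_le_card symmDiff_le_sup
      _ ≤ (dsc n π ψ).card + (dsc n ψ φ).card := card_union_le _ _
      _ ≤ (SimpleGraph.Walk.cons hadj w).length := by
          simp only [SimpleGraph.Walk.length_cons]; omega

lemma dist_Gn_eq_card_dsc {n : ℕ} (π φ : Perm (Fin n)) :
    (Gn n).dist π φ = (dsc n π φ).card := by
  obtain ⟨w, hw⟩ := exists_walk_length_eq_card_dsc π φ
  obtain ⟨w', hw'⟩ := SimpleGraph.Reachable.exists_walk_length_eq_dist ⟨w⟩
  exact le_antisymm (hw ▸ (Gn n).dist_le w) (hw' ▸ card_dsc_le_length w')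

lemma sum_symmDiff_eq_add_iff_disjoint {α M : Type*} [DecidableEq α] [AddCommMonoid M]
    [PartialOrder M] [IsOrderedCancelAddMonoid M] {s t : Finset α} {f : α → M}
    (hf : ∀ x ∈ s ∩ t, 0 < f x) :
    ∑ x ∈ symmDiff s t, f x = ∑ x ∈ s, f x + ∑ x ∈ t, f x ↔ Disjoint s t := by
  have key : ∑ x ∈ s, f x + ∑ x ∈ t, f x =
      ∑ x ∈ symmDiff s t, f x + (∑ x ∈ s ∩ t, f x + ∑ x ∈ s ∩ t, f x) := by
    rw [← add_assoc, symmDiff_eq_sup_sdiff_inf, sup_eq_union, inf_eq_inter,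
      sum_sdiff inter_subset_union, sum_union_inter]
  rw [key, left_eq_add, disjoint_iff_inter_eq_empty]
  constructor
  · contrapose
    intro hne
    have hpos := sum_pos hf (nonempty_iff_ne_empty.2 hne)
    exact (add_pos hpos hpos).ne'
  · intro h
    simp [h]

theorem between_Gn_iff_between_dW_general (n : ℕ)
    (W : Fin n → Fin n → ℝ) (hW : IsWeight n W)
    (hpos : ∀ i j : Fin n, i < j → 0 < W i j)
    (π ψ φ : Equiv.Perm (Fin n)) :
    (Gn n).dist π φ = (Gn n).dist π ψ + (Gn n).dist ψ φ ↔
      dW n W π φ = dW n W π ψ + dW n W ψ φ := by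
  have hT : (∑ p ∈ pairs n, W p.1 p.2) ≠ 0 := hW.2.2.ne'
  have hWpos : ∀ p ∈ dsc n π ψ ∩ dsc n ψ φ, 0 < W p.1 p.2 :=
    fun p hp => hpos _ _ (mem_dsc_iff.1 (mem_inter.1 hp).1).1
  rw [dist_Gn_eq_card_dsc, dist_Gn_eq_card_dsc, dist_Gn_eq_card_dsc, dW, dW, dW, ← add_div,
    div_left_inj' hT, card_eq_sum_ones, card_eq_sum_ones, card_eq_sum_ones,
    dsc_eq_symmDiff n π ψ φ, sum_symmDiff_eq_add_iff_disjoint (fun _ _ => Nat.one_pos),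
    sum_symmDiff_eq_add_iff_disjoint hWpos]

/-- Let `n ≥ 3` and let `W` be a weight with `w_{i,j} > 0` for all `i < j`.
For any three pairwise distinct permutations `π, ψ, φ ∈ S_n`, the point `ψ`
lies between `π` and `φ` with respect to the graph metric `d_{G_n}` iff it
lies between them with respect to `d_W`. -/
theorem between_Gn_iff_between_dW (n : ℕ) (hn : 3 ≤ n)
    (W : Fin n → Fin n → ℝ) (hW : IsWeight n W)
    (hpos : ∀ i j : Fin n, i < j → 0 < W i j)
    (π ψ φ : Equiv.Perm (Fin n))
    (h1 : π ≠ ψ) (h2 : ψ ≠ φ) (h3 : π ≠ φ) :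
    (Gn n).dist π φ = (Gn n).dist π ψ + (Gn n).dist ψ φ ↔
      dW n W π φ = dW n W π ψ + dW n W ψ φ :=
  between_Gn_iff_between_dW_general n W hW hpos π ψ φ
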